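/- (Inclusion criterion for a regular fraction.) Let F ⊆ D = {−1,+1}^m be a fraction with indicator coefficients b_β = 2^{−m} · Σ_{t ∈ F} (X^β(t) : ℝ). Let α_1, …, α_k ∈ Fin m → ZMod 2 be linearly independent over ZMod 2, let e_1, …, e_k ∈ {−1,+1}, and let R = {t ∈ D : X^{α_j}(t) = e_j for all j = 1,…,k} be the corresponding regular fraction. Then R ⊆ F if and only if Σ_{S ⊆ {1,…,k}} (∏_{j ∈ S} e_j) · b_{Σ_{j ∈ S} α_j} = 1, where the sum runs over all subsets S of {1,…,k} (the empty set contributing b_0) and Σ_{j ∈ S} α_j is computed in (ZMod 2)^m. -/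

import Mathlib

/-! Each factor `1 + e_j X^{α_j}(t)` is `2` if `X^{α_j}(t) = e_j` and `0` otherwise, so expanding
`∏_j (1 + e_j X^{α_j}(t))` over subsets `S` shows that the sum in the criterion equals
`2^{k-m} |F ∩ R|`. For `F = D`, orthogonality of the characters `X^β` leaves only the terms with
`∑_{j ∈ S} α_j = 0`, i.e. (by linear independence) only `S = ∅`; hence `|R| = 2^{m-k}`, and the
sum is `1` exactly when `|F ∩ R| = |R|`, that is, when `R ⊆ F`. -/

/-- The monomial `X^γ` on the full factorial design `D = {-1,+1}^m`:
`X^γ(t) = ∏_{i : γ i = 1} t i`. -/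
def Xmon {m : ℕ} (γ : Fin m → ZMod 2) (t : Fin m → ℤˣ) : ℤˣ :=
  ∏ i ∈ Finset.univ.filter (fun i => γ i = 1), t i

open Finset

lemma ZMod.eq_zero_or_eq_one (a : ZMod 2) : a = 0 ∨ a = 1 := by
  revert a; decide

variable {m : ℕ}

lemma Xmon_eq_prod_uzpow (γ : Fin m → ZMod 2) (t : Fin m → ℤˣ) :
    Xmon γ t = ∏ i, t i ^ γ i := by
  rw [Xmon, prod_filter]
  refine prod_congr rfl fun i _ => ?_
  rcases ZMod.eq_zero_or_eq_one (γ i) with h | h <;> simp [h]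

lemma Xmon_zero (t : Fin m → ℤˣ) : Xmon 0 t = 1 := by
  simp [Xmon_eq_prod_uzpow]

lemma Xmon_add (γ δ : Fin m → ZMod 2) (t : Fin m → ℤˣ) :
    Xmon (γ + δ) t = Xmon γ t * Xmon δ t := by
  simp only [Xmon_eq_prod_uzpow, Pi.add_apply, uzpow_add, prod_mul_distrib]

lemma Xmon_sum {ι : Type*} (s : Finset ι) (α : ι → Fin m → ZMod 2) (t : Fin m → ℤˣ) :
    Xmon (∑ j ∈ s, α j) t = ∏ j ∈ s, Xmon (α j) t := by
  induction s using Finset.cons_induction with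
  | empty => exact Xmon_zero t
  | cons j s hj ih => rw [sum_cons, prod_cons, Xmon_add, ih]

def XmonChar (γ : Fin m → ZMod 2) : (Fin m → ℤˣ) →* ℝ where
  toFun t := ((Xmon γ t : ℤ) : ℝ)
  map_one' := by simp [Xmon]
  map_mul' s t := by simp [Xmon, prod_mul_distrib]

lemma XmonChar_ne_one {γ : Fin m → ZMod 2} (hγ : γ ≠ 0) : XmonChar γ ≠ 1 := by
  obtain ⟨i, hi⟩ := Function.ne_iff.mp hγ
  replace hi : γ i = 1 := (ZMod.eq_zero_or_eq_one (γ i)).resolve_left hi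
  have hflip : Xmon γ (Pi.mulSingle i (-1)) = -1 := by
    simp [Xmon, prod_pi_mulSingle', hi]
  intro h
  have := DFunLike.congr_fun h (Pi.mulSingle i (-1))
  simp only [XmonChar, MonoidHom.coe_mk, OneHom.coe_mk, hflip, MonoidHom.one_apply] at this
  norm_num at this

lemma sum_Xmon (γ : Fin m → ZMod 2) :
    ∑ t, ((Xmon γ t : ℤ) : ℝ) = if γ = 0 then 2 ^ m else 0 := by
  split_ifs with hγ
  · simp [hγ, Xmon_zero]
  · exact sum_hom_units_eq_zero (XmonChar γ) (XmonChar_ne_one hγ)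

lemma LinearIndependent.sum_eq_zero_iff {R M ι : Type*} [Ring R] [Nontrivial R]
    [AddCommGroup M] [Module R M] {v : ι → M} (hv : LinearIndependent R v) (s : Finset ι) :
    ∑ i ∈ s, v i = 0 ↔ s = ∅ := by
  refine ⟨fun hs => ?_, fun hs => hs ▸ sum_empty⟩
  by_contra hne
  obtain ⟨i, hi⟩ := nonempty_iff_ne_empty.mpr hne
  exact one_ne_zero (linearIndependent_iff'.mp hv s (fun _ => 1) (by simpa using hs) i hi)

lemma one_add_units_mul_eq (u v : ℤˣ) :
    1 + ((u : ℤ) : ℝ) * ((v : ℤ) : ℝ) = if v = u then 2 else 0 := by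
  rcases Int.units_eq_one_or u with rfl | rfl <;>
    rcases Int.units_eq_one_or v with rfl | rfl <;> norm_num

variable {ι : Type*} [Fintype ι]

lemma sum_powerset_prod_sign_mul_Xmon (α : ι → Fin m → ZMod 2) (e : ι → ℤˣ) (t : Fin m → ℤˣ) :
    ∑ S : Finset ι, (∏ j ∈ S, ((e j : ℤ) : ℝ)) * ((Xmon (∑ j ∈ S, α j) t : ℤ) : ℝ) =
      if ∀ j, Xmon (α j) t = e j then 2 ^ Fintype.card ι else 0 := by
  simp_rw [Xmon_sum, Units.coe_prod, Int.cast_prod, ← prod_mul_distrib, ← powerset_univ,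
    ← prod_one_add, one_add_units_mul_eq, Fintype.prod_ite_zero, prod_const, card_univ]

lemma sum_powerset_prod_sign_mul_sum_Xmon (F : Finset (Fin m → ℤˣ)) (α : ι → Fin m → ZMod 2)
    (e : ι → ℤˣ) :
    ∑ S : Finset ι, (∏ j ∈ S, ((e j : ℤ) : ℝ)) * ∑ t ∈ F, ((Xmon (∑ j ∈ S, α j) t : ℤ) : ℝ) =
      2 ^ Fintype.card ι * #{t ∈ F | ∀ j, Xmon (α j) t = e j} := by
  simp_rw [mul_sum]
  rw [sum_comm]
  simp_rw [sum_powerset_prod_sign_mul_Xmon, sum_ite, sum_const_zero, add_zero, sum_const,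
    nsmul_eq_mul, mul_comm]

lemma two_pow_card_mul_card_regular {α : ι → Fin m → ZMod 2}
    (hα : LinearIndependent (ZMod 2) α) (e : ι → ℤˣ) :
    (2 : ℝ) ^ Fintype.card ι * #{t | ∀ j, Xmon (α j) t = e j} = 2 ^ m := by
  classical
  have h := sum_powerset_prod_sign_mul_sum_Xmon univ α e
  simp_rw [sum_Xmon, hα.sum_eq_zero_iff, mul_ite, mul_zero, sum_ite_eq', mem_univ, if_true,
    prod_empty, one_mul] at h
  exact h.symm

lemma card_filter_eq_card_filter_univ_iff {α : Type*} [Fintype α] (s : Finset α)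
    (p : α → Prop) [DecidablePred p] :
    #(s.filter p) = #(univ.filter p) ↔ {x | p x} ⊆ (s : Set α) := by
  have hsub : s.filter p ⊆ univ.filter p := filter_subset_filter p (subset_univ s)
  calc #(s.filter p) = #(univ.filter p) ↔ s.filter p = univ.filter p :=
        ⟨fun h => eq_of_subset_of_card_le hsub h.ge, congrArg card⟩
    _ ↔ {x | p x} ⊆ (s : Set α) := by simp [Finset.ext_iff, Set.subset_def]

/-- Inclusion criterion for a regular fraction: with indicator coefficients
`b_β = 2^{-m} ∑_{t ∈ F} X^β(t)`, and `α_1, …, α_k` linearly independent, the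
regular fraction `R = {t : X^{α_j}(t) = e_j for all j}` satisfies `R ⊆ F` if and
only if `∑_{S ⊆ {1,…,k}} (∏_{j ∈ S} e_j) b_{∑_{j ∈ S} α_j} = 1`. -/
theorem regular_subset_iff (m k : ℕ) (F : Finset (Fin m → ℤˣ))
    (b : (Fin m → ZMod 2) → ℝ)
    (hb : ∀ β, b β = (1 / 2 ^ m : ℝ) * ∑ t ∈ F, ((Xmon β t : ℤ) : ℝ))
    (α : Fin k → Fin m → ZMod 2) (hα : LinearIndependent (ZMod 2) α)
    (e : Fin k → ℤˣ) :
    {t : Fin m → ℤˣ | ∀ j, Xmon (α j) t = e j} ⊆ (F : Set (Fin m → ℤˣ)) ↔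
      ∑ S : Finset (Fin k), (∏ j ∈ S, ((e j : ℤ) : ℝ)) * b (∑ j ∈ S, α j) = 1 := by
  have hR := two_pow_card_mul_card_regular hα e
  simp_rw [hb, mul_left_comm _ (1 / 2 ^ m : ℝ), ← mul_sum, sum_powerset_prod_sign_mul_sum_Xmon]
  rw [one_div_mul_eq_div, div_eq_one_iff_eq (by positivity), ← hR, mul_right_inj' (by positivity),
    Nat.cast_inj, card_filter_eq_card_filter_univ_iff]
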